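/- Let (H,{F_A},{F_G}) be a GR(1) game with singleton winning conditions, and let f¹ be the memoryless system strategy extracted from the ranking of the 4-nested fixed point φ₄. Then for every state q ∈ ⟦φ₄⟧ the following three properties hold: (i) L_q(H,f¹) ⊆ L̄_q(H,F_A) ∪ L_q(H,F_G); (ii) L_q(H,f¹) ∩ L_q(H,F_G) ≠ ∅; and (iii) if L_q(H,F_G) ⊆ L_q(H,F_A), then Pre(L_q(H,f¹)) = Pre(L_q(H,f¹) ∩ L_q(H,F_A)). -/
import Mathlib


namespace GR1

/-- A two-player game graph `H = ⟨Q⁰, Q¹, δ⁰, δ¹, q₀⟩`.  `env` is the set `Q⁰` of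
environment states, `sys` the set `Q¹` of system states, and `delta` combines the
transition functions `δ⁰` and `δ¹`. -/
structure GameGraph (Q : Type*) where
  env : Set Q
  sys : Set Q
  delta : Q → Set Q
  disjoint_env_sys : Disjoint env sys
  union_env_sys : env ∪ sys = Set.univ
  delta_env : ∀ q ∈ env, delta q ⊆ sys
  delta_sys : ∀ q ∈ sys, delta q ⊆ env
  delta_nonempty : ∀ q, (delta q).Nonempty
  init : Q
  init_env : init ∈ env

namespace GameGraph

/-- The existential predecessor operator `Pre∃`. -/
def PreE {Q : Type*} (G : GameGraph Q) (P : Set Q) : Set Q :=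
  {q | (G.delta q ∩ P).Nonempty}

/-- The universal predecessor operator `Pre∀`. -/
def PreA {Q : Type*} (G : GameGraph Q) (P : Set Q) : Set Q :=
  {q | G.delta q ⊆ P}

/-- The player-0 (environment) controllable predecessor operator `Pre⁰`. -/
def Pre0 {Q : Type*} (G : GameGraph Q) (P : Set Q) : Set Q :=
  {q | q ∈ G.env ∧ (G.delta q ∩ P).Nonempty} ∪ {q | q ∈ G.sys ∧ G.delta q ⊆ P}

/-- The player-1 (system) controllable predecessor operator `Pre¹`. -/
def Pre1 {Q : Type*} (G : GameGraph Q) (P : Set Q) : Set Q :=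
  {q | q ∈ G.env ∧ G.delta q ⊆ P} ∪ {q | q ∈ G.sys ∧ (G.delta q ∩ P).Nonempty}

/-- The conditional predecessor `Precond(P,P') = Pre∃(P) ∩ Pre¹(P ∪ P')`. -/
def Precond {Q : Type*} (G : GameGraph Q) (P P' : Set Q) : Set Q :=
  G.PreE P ∩ G.Pre1 (P ∪ P')

/-- The dual conditional predecessor `Precondᶜ(P,P') = Pre∀(P) ∪ Pre⁰(P ∩ P')`. -/
def PrecondC {Q : Type*} (G : GameGraph Q) (P P' : Set Q) : Set Q :=
  G.PreA P ∪ G.Pre0 (P ∩ P')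

end GameGraph

/-- Knaster–Tarski least fixed point over the powerset lattice. -/
def lfpSet {Q : Type*} (F : Set Q → Set Q) : Set Q := ⋂₀ {S | F S ⊆ S}

/-- Knaster–Tarski greatest fixed point over the powerset lattice. -/
def gfpSet {Q : Type*} (F : Set Q → Set Q) : Set Q := ⋃₀ {S | S ⊆ F S}

/-- Knaster–Tarski least fixed point over the lattice of vectors of sets. -/
def lfpVec {Q : Type*} {n : ℕ} (F : (Fin n → Set Q) → (Fin n → Set Q)) : Fin n → Set Q :=
  fun a => ⋂ V ∈ {V : Fin n → Set Q | ∀ a', F V a' ⊆ V a'}, V a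

/-- Knaster–Tarski greatest fixed point over the lattice of vectors of sets. -/
def gfpVec {Q : Type*} {n : ℕ} (F : (Fin n → Set Q) → (Fin n → Set Q)) : Fin n → Set Q :=
  fun a => ⋃ V ∈ {V : Fin n → Set Q | ∀ a', V a' ⊆ F V a'}, V a

/-- Cyclic successor of a mode: `a⁺ = (a mod n) + 1` in 1-based counting. -/
def modeSucc {n : ℕ} (a : Fin n) : Fin n :=
  ⟨(a.val + 1) % n, Nat.mod_lt _ a.pos⟩

/-- `π` is an (infinite) play over `G` starting in the state `q`. -/
def IsPlayFrom {Q : Type*} (G : GameGraph Q) (q : Q) (π : ℕ → Q) : Prop :=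
  π 0 = q ∧ ∀ k, π (k + 1) ∈ G.delta (π k)

/-- `Inf(π) ∩ F ≠ ∅` : the play `π` visits the set `F` infinitely often. -/
def InfOft {Q : Type*} (π : ℕ → Q) (F : Set Q) : Prop := ∀ n, ∃ k, n ≤ k ∧ π k ∈ F

/-- `L_q(H,F)` : plays from `q` satisfying the Büchi condition `F`. -/
def LBuchi {Q : Type*} (G : GameGraph Q) (q : Q) (F : Set Q) : Set (ℕ → Q) :=
  {π | IsPlayFrom G q π ∧ InfOft π F}

/-- `L_q(H,𝓕)` : plays from `q` satisfying the generalized Büchi condition `𝓕`. -/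
def LGenBuchi {Q ι : Type*} (G : GameGraph Q) (q : Q) (F : ι → Set Q) : Set (ℕ → Q) :=
  {π | IsPlayFrom G q π ∧ ∀ i, InfOft π (F i)}

/-- `Pre(L)` : the set of all finite prefixes of the (infinite) words in `L`. -/
def prefixes {Q : Type*} (L : Set (ℕ → Q)) : Set (List Q) :=
  {w | ∃ π ∈ L, ∃ k, w = (List.range k).map π}

/-- A (history dependent) system strategy: on a history ending in a system state it
produces a `δ¹`-successor of that state. -/
def IsSysStrategy {Q : Type*} (G : GameGraph Q) (f : List Q → Q) : Prop :=
  ∀ (w : List Q) (q : Q), q ∈ G.sys → f (w ++ [q]) ∈ G.delta q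

/-- The finite history `π|_{[0,k]}` of a play. -/
def histUpTo {Q : Type*} (π : ℕ → Q) (k : ℕ) : List Q := (List.range (k + 1)).map π

/-- `L_q(H,f¹)` : plays from `q` compliant with the system strategy `f¹`. -/
def Lstrat {Q : Type*} (G : GameGraph Q) (q : Q) (f : List Q → Q) : Set (ℕ → Q) :=
  {π | IsPlayFrom G q π ∧ ∀ k, π k ∈ G.sys → π (k + 1) = f (histUpTo π k)}

/-- `L_q(H,f¹)` for a memoryless system strategy `f¹ : Q → Q`. -/
def Lmem {Q : Type*} (G : GameGraph Q) (q : Q) (f : Q → Q) : Set (ℕ → Q) :=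
  {π | IsPlayFrom G q π ∧ ∀ k, π k ∈ G.sys → π (k + 1) = f (π k)}

/-- Strict lexicographic order on ranks. -/
def rankLt (p r : ℕ × ℕ) : Prop := p.1 < r.1 ∨ (p.1 = r.1 ∧ p.2 < r.2)

/-- Lexicographic order on ranks. -/
def rankLe (p r : ℕ × ℕ) : Prop := p.1 < r.1 ∨ (p.1 = r.1 ∧ p.2 ≤ r.2)

/-! ### The 4-nested fixed point `φ₄` for singleton winning conditions -/

/-- The body `(F_G ∩ Pre¹(Z)) ∪ Pre¹(Y) ∪ ((Q∖F_A) ∩ Precond(W, X∖F_A))`. -/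
def body {Q : Type*} (G : GameGraph Q) (FA FG Z Y X W : Set Q) : Set Q :=
  (FG ∩ G.Pre1 Z) ∪ G.Pre1 Y ∪ (FAᶜ ∩ G.Precond W (X \ FA))

def innerW {Q : Type*} (G : GameGraph Q) (FA FG Z Y X : Set Q) : Set Q :=
  lfpSet (fun W => body G FA FG Z Y X W)

def innerX {Q : Type*} (G : GameGraph Q) (FA FG Z Y : Set Q) : Set Q :=
  gfpSet (fun X => innerW G FA FG Z Y X)

def innerY {Q : Type*} (G : GameGraph Q) (FA FG Z : Set Q) : Set Q :=
  lfpSet (fun Y => innerX G FA FG Z Y)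

/-- `⟦φ₄⟧ = Z^∞` : the value of `νZ.μY.νX.μW. (F_G ∩ Pre¹(Z)) ∪ Pre¹(Y) ∪
((Q∖F_A) ∩ Precond(W, X∖F_A))`. -/
def phi4 {Q : Type*} (G : GameGraph Q) (FA FG : Set Q) : Set Q :=
  gfpSet (fun Z => innerY G FA FG Z)

/-- The approximants `Yⁱ` of `Y` in the terminal iteration over `Z` (`Y⁰ = ∅`). -/
def Yapprox {Q : Type*} (G : GameGraph Q) (FA FG : Set Q) : ℕ → Set Q
  | 0 => ∅
  | i + 1 => innerX G FA FG (phi4 G FA FG) (Yapprox G FA FG i)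

/-- The approximants `Wⁱ_j` of `W` computed with `X = Xⁱ = Yⁱ` and `Y = Yⁱ⁻¹`. -/
def Wapprox {Q : Type*} (G : GameGraph Q) (FA FG : Set Q) (i : ℕ) : ℕ → Set Q
  | 0 => ∅
  | j + 1 =>
      body G FA FG (phi4 G FA FG) (Yapprox G FA FG (i - 1)) (Yapprox G FA FG i)
        (Wapprox G FA FG i j)

/-- `rank(q) = (i,j)` iff `q ∈ (Yⁱ∖Yⁱ⁻¹) ∩ (Wⁱ_j∖Wⁱ_{j−1})` with `i,j > 0`. -/
def hasRank {Q : Type*} (G : GameGraph Q) (FA FG : Set Q) (q : Q) (i j : ℕ) : Prop :=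
  0 < i ∧ 0 < j ∧
    q ∈ (Yapprox G FA FG i \ Yapprox G FA FG (i - 1)) ∩
        (Wapprox G FA FG i j \ Wapprox G FA FG i (j - 1))

/-- The memoryless system strategy extracted from the ranking: `f¹(q) ∈ δ¹(q)`,
`rank(f¹(q)) < rank(q)` whenever `rank(q) > (1,1)`, and `f¹(q) ∈ Z^∞` otherwise. -/
def GoodStrategy {Q : Type*} (G : GameGraph Q) (FA FG : Set Q) (f : Q → Q) : Prop :=
  ∀ q, q ∈ G.sys → q ∈ phi4 G FA FG →
    f q ∈ G.delta q ∧
      ∀ i j, hasRank G FA FG q i j →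
        (((i, j) = ((1 : ℕ), (1 : ℕ)) → f q ∈ phi4 G FA FG) ∧
          ((i, j) ≠ ((1 : ℕ), (1 : ℕ)) →
            ∃ i' j', hasRank G FA FG (f q) i' j' ∧ rankLt (i', j') (i, j)))

/-! ### The negated fixed point `φ̄₄` (singleton conditions) -/

/-- The simplified negated body
`Pre⁰(Z̄) ∪ ((Q∖F_G) ∩ F_A ∩ Pre⁰(Ȳ)) ∪ ((Q∖F_G) ∩ Precondᶜ(W̄, X̄ ∪ F_A))`. -/
def nbody {Q : Type*} (G : GameGraph Q) (FA FG Z Y X W : Set Q) : Set Q :=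
  G.Pre0 Z ∪ (FGᶜ ∩ FA ∩ G.Pre0 Y) ∪ (FGᶜ ∩ G.PrecondC W (X ∪ FA))

/-- The simplified negated fixed point `φ̄₄ = μZ̄.νȲ.μX̄.νW̄. nbody`. -/
def phi4neg {Q : Type*} (G : GameGraph Q) (FA FG : Set Q) : Set Q :=
  lfpSet (fun Z => gfpSet (fun Y => lfpSet (fun X => gfpSet (fun W =>
    nbody G FA FG Z Y X W))))

/-- The unsimplified negation body
`((Q∖F_G) ∪ Pre⁰(Z̄)) ∩ Pre⁰(Ȳ) ∩ (F_A ∪ Precondᶜ(W̄, X̄ ∪ F_A))`. -/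
def nbodyRaw {Q : Type*} (G : GameGraph Q) (FA FG Z Y X W : Set Q) : Set Q :=
  (FGᶜ ∪ G.Pre0 Z) ∩ G.Pre0 Y ∩ (FA ∪ G.PrecondC W (X ∪ FA))

/-- The unsimplified negated fixed point. -/
def phi4negRaw {Q : Type*} (G : GameGraph Q) (FA FG : Set Q) : Set Q :=
  lfpSet (fun Z => gfpSet (fun Y => lfpSet (fun X => gfpSet (fun W =>
    nbodyRaw G FA FG Z Y X W))))

/-- The approximants `Z̄ⁱ` of the negated fixed point (`Z̄⁰ = ∅`). -/
def Zbar {Q : Type*} (G : GameGraph Q) (FA FG : Set Q) : ℕ → Set Q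
  | 0 => ∅
  | i + 1 =>
      gfpSet (fun Y => lfpSet (fun X => gfpSet (fun W =>
        nbody G FA FG (Zbar G FA FG i) Y X W)))

/-- The approximants `X̄ⁱ_j` of `X̄` computed while computing `Z̄ⁱ` (using `Ȳ = Z̄ⁱ` and
`Z̄ = Z̄ⁱ⁻¹`), with `X̄ⁱ₀ = ∅`. -/
def Xbar {Q : Type*} (G : GameGraph Q) (FA FG : Set Q) (i : ℕ) : ℕ → Set Q
  | 0 => ∅
  | j + 1 =>
      gfpSet (fun W =>
        nbody G FA FG (Zbar G FA FG (i - 1)) (Zbar G FA FG i) (Xbar G FA FG i j) W)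

/-- The negated rank: `rank(q) = (i,j)` iff `q ∈ X̄ⁱ_j ∖ X̄ⁱ_{j−1}` with `i,j > 0`. -/
def nrank {Q : Type*} (G : GameGraph Q) (FA FG : Set Q) (q : Q) (i j : ℕ) : Prop :=
  0 < i ∧ 0 < j ∧ q ∈ Xbar G FA FG i j \ Xbar G FA FG i (j - 1)

/-- Environment moves permitted during the inductive construction of the reachable
region `R_{f¹}` (cases (a'), (b'), (c'2), (c'3) and the remaining case (c'1)). -/
def envStep {Q : Type*} (G : GameGraph Q) (FA FG : Set Q) (q' q'' : Q) : Prop :=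
  q'' ∈ G.delta q' ∧
    ∃ i j, nrank G FA FG q' i j ∧
      ((q'' ∈ (phi4 G FA FG)ᶜ ∧ ∃ i' j', nrank G FA FG q'' i' j' ∧ i' ≤ i - 1) ∨
       (q' ∈ FA \ FG ∧ q'' ∈ (phi4 G FA FG)ᶜ ∧
          ∃ i' j', nrank G FA FG q'' i' j' ∧ i' ≤ i) ∨
       (q'' ∈ (phi4 G FA FG)ᶜ ∧
          ∃ i' j', nrank G FA FG q'' i' j' ∧ rankLe (i', j') (i, j - 1)) ∨
       (q'' ∈ (phi4 G FA FG)ᶜ ∧ q'' ∈ FA ∧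
          ∃ i' j', nrank G FA FG q'' i' j' ∧ rankLe (i', j') (i, j)) ∨
       (∀ p ∈ G.delta q', p ∈ (phi4 G FA FG)ᶜ ∧
          ∃ i' j', nrank G FA FG p i' j' ∧ rankLe (i', j') (i, j)))

/-- `L_q(H,f¹,R_{f¹})` : plays from `q` compliant with `f¹` that remain within the
reachable region `R_{f¹}`, i.e. in which every environment move follows the rules of
the inductive construction of `R_{f¹}`. -/
def Lrestr {Q : Type*} (G : GameGraph Q) (FA FG : Set Q) (q : Q) (f : List Q → Q) :
    Set (ℕ → Q) :=
  {π | π ∈ Lstrat G q f ∧ ∀ k, π k ∈ G.env → envStep G FA FG (π k) (π (k + 1))}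

/-! ### The vectorized fixed point `φ₄ᵛ` for general GR(1) conditions -/

/-- The body `Ω^{ab}` of the vectorized fixed point. -/
def bodyV {Q : Type*} {n m : ℕ} (G : GameGraph Q) (FAv : Fin m → Set Q)
    (FGv : Fin n → Set Q) (Zv : Fin n → Set Q) (a : Fin n) (b : Fin m)
    (Y X W : Set Q) : Set Q :=
  (FGv a ∩ G.Pre1 (Zv (modeSucc a))) ∪ G.Pre1 Y ∪ ((FAv b)ᶜ ∩ G.Precond W (X \ FAv b))

def innerWV {Q : Type*} {n m : ℕ} (G : GameGraph Q) (FAv : Fin m → Set Q)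
    (FGv : Fin n → Set Q) (Zv : Fin n → Set Q) (a : Fin n) (b : Fin m)
    (Y X : Set Q) : Set Q :=
  lfpSet (fun W => bodyV G FAv FGv Zv a b Y X W)

def innerXV {Q : Type*} {n m : ℕ} (G : GameGraph Q) (FAv : Fin m → Set Q)
    (FGv : Fin n → Set Q) (Zv : Fin n → Set Q) (a : Fin n) (b : Fin m)
    (Y : Set Q) : Set Q :=
  gfpSet (fun X => innerWV G FAv FGv Zv a b Y X)

/-- The vector `[Z¹,…,Zⁿ]` of the vectorized fixed point `φ₄ᵛ`. -/
def phi4v {Q : Type*} {n m : ℕ} (G : GameGraph Q) (FAv : Fin m → Set Q)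
    (FGv : Fin n → Set Q) : Fin n → Set Q :=
  gfpVec (fun Zv a => lfpSet (fun Y => ⋃ b, innerXV G FAv FGv Zv a b Y))

/-- `⟦φ₄ᵛ⟧ = Z^∞ = ⋃_a Zᵃ^∞`. -/
def phi4vSem {Q : Type*} {n m : ℕ} (G : GameGraph Q) (FAv : Fin m → Set Q)
    (FGv : Fin n → Set Q) : Set Q :=
  ⋃ a, phi4v G FAv FGv a

/-- The approximants `ᵃYⁱ` (with `ᵃY⁰ = ∅`) of `Yᵃ` in the terminal iteration. -/
def YapproxV {Q : Type*} {n m : ℕ} (G : GameGraph Q) (FAv : Fin m → Set Q)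
    (FGv : Fin n → Set Q) (a : Fin n) : ℕ → Set Q
  | 0 => ∅
  | i + 1 => ⋃ b, innerXV G FAv FGv (phi4v G FAv FGv) a b (YapproxV G FAv FGv a i)

/-- The fixed point `ᵃᵇXⁱ` of `X^{ab}` computed during the `i`-th iteration. -/
def XfixV {Q : Type*} {n m : ℕ} (G : GameGraph Q) (FAv : Fin m → Set Q)
    (FGv : Fin n → Set Q) (a : Fin n) (b : Fin m) (i : ℕ) : Set Q :=
  innerXV G FAv FGv (phi4v G FAv FGv) a b (YapproxV G FAv FGv a (i - 1))

/-- The approximants `ᵃᵇWⁱ_j` of `W^{ab}` computed while computing `ᵃYⁱ`. -/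
def WapproxV {Q : Type*} {n m : ℕ} (G : GameGraph Q) (FAv : Fin m → Set Q)
    (FGv : Fin n → Set Q) (a : Fin n) (b : Fin m) (i : ℕ) : ℕ → Set Q
  | 0 => ∅
  | j + 1 =>
      bodyV G FAv FGv (phi4v G FAv FGv) a b (YapproxV G FAv FGv a (i - 1))
        (XfixV G FAv FGv a b i) (WapproxV G FAv FGv a b i j)

/-- The mode-based rank: `ᵃᵇrank(q) = (i,j)` iff
`q ∈ (ᵃYⁱ∖ᵃYⁱ⁻¹) ∩ (ᵃᵇWⁱ_j∖ᵃᵇWⁱ_{j−1})` with `i,j > 0`. -/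
def hasRankV {Q : Type*} {n m : ℕ} (G : GameGraph Q) (FAv : Fin m → Set Q)
    (FGv : Fin n → Set Q) (a : Fin n) (b : Fin m) (q : Q) (i j : ℕ) : Prop :=
  0 < i ∧ 0 < j ∧
    q ∈ (YapproxV G FAv FGv a i \ YapproxV G FAv FGv a (i - 1)) ∩
        (WapproxV G FAv FGv a b i j \ WapproxV G FAv FGv a b i (j - 1))

/-- The finite-memory system strategy extracted from the mode-based ranking. -/
def GoodStrategyV {Q : Type*} {n m : ℕ} (G : GameGraph Q) (FAv : Fin m → Set Q)
    (FGv : Fin n → Set Q) (f : Q × Fin n × Fin m → Q × Fin n × Fin m) : Prop :=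
  ∀ (q : Q) (a : Fin n) (b : Fin m), q ∈ G.sys → q ∈ phi4v G FAv FGv a →
    (f (q, a, b)).1 ∈ G.delta q ∧
      ∀ i j, hasRankV G FAv FGv a b q i j →
        (((i, j) = ((1 : ℕ), (1 : ℕ)) →
            (f (q, a, b)).1 ∈ phi4v G FAv FGv (modeSucc a) ∧
              (f (q, a, b)).2.1 = modeSucc a) ∧
          (1 < i ∧ j = 1 →
            (f (q, a, b)).2.1 = a ∧
              ∃ i' j',
                hasRankV G FAv FGv a ((f (q, a, b)).2.2) ((f (q, a, b)).1) i' j' ∧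
                  i' ≤ i - 1) ∧
          (1 < j →
            (f (q, a, b)).2.1 = a ∧ (f (q, a, b)).2.2 = b ∧
              ∃ i' j',
                hasRankV G FAv FGv a b ((f (q, a, b)).1) i' j' ∧
                  rankLe (i', j') (i, j - 1)))

/-- Compliance of a play with a finite-memory strategy via mode traces `α`, `β`. -/
def CompliantModeV {Q : Type*} {n m : ℕ} (G : GameGraph Q) (FAv : Fin m → Set Q)
    (FGv : Fin n → Set Q) (f : Q × Fin n × Fin m → Q × Fin n × Fin m)
    (π : ℕ → Q) (α : ℕ → Fin n) (β : ℕ → Fin m) : Prop :=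
  ∀ k,
    (π k ∈ G.sys → (π (k + 1), α (k + 1), β (k + 1)) = f (π k, α k, β k)) ∧
      (π k ∈ G.env →
        (hasRankV G FAv FGv (α k) (β k) (π (k + 1)) 1 1 →
            α (k + 1) = modeSucc (α k)) ∧
          ((∃ i, 1 < i ∧ hasRankV G FAv FGv (α k) (β k) (π (k + 1)) i 1) →
            α (k + 1) = α k) ∧
          ((∃ i j, 1 < j ∧ hasRankV G FAv FGv (α k) (β k) (π (k + 1)) i j) →
            α (k + 1) = α k ∧ β (k + 1) = β k))

/-- `L_q(H,f¹)` for a finite-memory strategy: plays from `q` compliant with `f¹`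
for some mode traces. -/
def LmodeV {Q : Type*} {n m : ℕ} (G : GameGraph Q) (FAv : Fin m → Set Q)
    (FGv : Fin n → Set Q) (q : Q) (f : Q × Fin n × Fin m → Q × Fin n × Fin m) :
    Set (ℕ → Q) :=
  {π | IsPlayFrom G q π ∧ ∃ α β, CompliantModeV G FAv FGv f π α β}

/-- `ᵃD = F_Gᵃ ∩ Pre¹(Z^{a⁺,∞})`. -/
def DsetV {Q : Type*} {n m : ℕ} (G : GameGraph Q) (FAv : Fin m → Set Q)
    (FGv : Fin n → Set Q) (a : Fin n) : Set Q :=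
  FGv a ∩ G.Pre1 (phi4v G FAv FGv (modeSucc a))

/-- `ᵃEⁱ = Pre¹(ᵃYⁱ⁻¹) ∖ ᵃYⁱ⁻¹`. -/
def EsetV {Q : Type*} {n m : ℕ} (G : GameGraph Q) (FAv : Fin m → Set Q)
    (FGv : Fin n → Set Q) (a : Fin n) (i : ℕ) : Set Q :=
  G.Pre1 (YapproxV G FAv FGv a (i - 1)) \ YapproxV G FAv FGv a (i - 1)

/-- `ᵃᵇΘⁱ_j = (Q∖F_Aᵇ) ∩ Precond(ᵃᵇWⁱ_{j−1}, ᵃᵇXⁱ∖F_Aᵇ)`. -/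
def ThetaV {Q : Type*} {n m : ℕ} (G : GameGraph Q) (FAv : Fin m → Set Q)
    (FGv : Fin n → Set Q) (a : Fin n) (b : Fin m) (i j : ℕ) : Set Q :=
  (FAv b)ᶜ ∩ G.Precond (WapproxV G FAv FGv a b i (j - 1)) (XfixV G FAv FGv a b i \ FAv b)

/-- `ᵃᵇRⁱ_j = ᵃᵇΘⁱ_j ∖ (ᵃᵇWⁱ_{j−1} ∪ ᵃYⁱ⁻¹ ∪ ᵃEⁱ ∪ ᵃD)`. -/
def RsetV {Q : Type*} {n m : ℕ} (G : GameGraph Q) (FAv : Fin m → Set Q)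
    (FGv : Fin n → Set Q) (a : Fin n) (b : Fin m) (i j : ℕ) : Set Q :=
  ThetaV G FAv FGv a b i j \
    (WapproxV G FAv FGv a b i (j - 1) ∪ YapproxV G FAv FGv a (i - 1) ∪
      EsetV G FAv FGv a i ∪ DsetV G FAv FGv a)

/-! ### The negated vectorized fixed point -/

/-- The body of the negated vectorized fixed point. -/
def nbodyV {Q : Type*} {n m : ℕ} (G : GameGraph Q) (FAv : Fin m → Set Q)
    (FGv : Fin n → Set Q) (Zv : Fin n → Set Q) (a : Fin n) (b : Fin m)
    (Y X W : Set Q) : Set Q :=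
  G.Pre0 (Zv (modeSucc a)) ∪ ((FGv a)ᶜ ∩ FAv b ∩ G.Pre0 Y) ∪
    ((FGv a)ᶜ ∩ G.PrecondC W (X ∪ FAv b))

/-- The coordinated approximants `Z̄ᵃⁱ` of the negated vectorized fixed point. -/
def ZbarV {Q : Type*} {n m : ℕ} (G : GameGraph Q) (FAv : Fin m → Set Q)
    (FGv : Fin n → Set Q) : ℕ → Fin n → Set Q
  | 0 => fun _ => ∅
  | i + 1 => fun a =>
      gfpSet (fun Y => ⋂ b, lfpSet (fun X => gfpSet (fun W =>
        nbodyV G FAv FGv (ZbarV G FAv FGv i) a b Y X W)))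

/-- The approximants `X̄^{ab,i}_j` of `X̄^{ab}` computed during the `i`-th iteration. -/
def XbarV {Q : Type*} {n m : ℕ} (G : GameGraph Q) (FAv : Fin m → Set Q)
    (FGv : Fin n → Set Q) (a : Fin n) (b : Fin m) (i : ℕ) : ℕ → Set Q
  | 0 => ∅
  | j + 1 =>
      gfpSet (fun W =>
        nbodyV G FAv FGv (ZbarV G FAv FGv (i - 1)) a b (ZbarV G FAv FGv i a)
          (XbarV G FAv FGv a b i j) W)

/-- The negated mode-based rank: `ᵃᵇrank(q) = (i,j)` iff `q ∈ X̄^{ab,i}_j∖X̄^{ab,i}_{j−1}`. -/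
def nrankV {Q : Type*} {n m : ℕ} (G : GameGraph Q) (FAv : Fin m → Set Q)
    (FGv : Fin n → Set Q) (a : Fin n) (b : Fin m) (q : Q) (i j : ℕ) : Prop :=
  0 < i ∧ 0 < j ∧ q ∈ XbarV G FAv FGv a b i j \ XbarV G FAv FGv a b i (j - 1)

/-- Environment moves permitted during the inductive construction of `R_{f¹}`
in the vectorized setting. -/
def envStepV {Q : Type*} {n m : ℕ} (G : GameGraph Q) (FAv : Fin m → Set Q)
    (FGv : Fin n → Set Q) (q' q'' : Q) : Prop :=
  q'' ∈ G.delta q' ∧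
    ∃ (a : Fin n) (b : Fin m) (i j : ℕ), nrankV G FAv FGv a b q' i j ∧
      ((q'' ∈ (phi4vSem G FAv FGv)ᶜ ∧
          ∃ b' i' j', nrankV G FAv FGv (modeSucc a) b' q'' i' j' ∧ i' ≤ i - 1) ∨
       (q' ∈ FAv b \ FGv a ∧ q'' ∈ (phi4vSem G FAv FGv)ᶜ ∧
          ∃ b' i' j', nrankV G FAv FGv a b' q'' i' j' ∧ i' ≤ i) ∨
       (q'' ∈ (phi4vSem G FAv FGv)ᶜ ∧
          ∃ i' j', nrankV G FAv FGv a b q'' i' j' ∧ rankLe (i', j') (i, j - 1)) ∨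
       (q'' ∈ (phi4vSem G FAv FGv)ᶜ ∧ q'' ∈ FAv b ∧
          ∃ i' j', nrankV G FAv FGv a b q'' i' j' ∧ rankLe (i', j') (i, j)) ∨
       (∀ p ∈ G.delta q', p ∈ (phi4vSem G FAv FGv)ᶜ ∧
          ∃ i' j', nrankV G FAv FGv a b p i' j' ∧ rankLe (i', j') (i, j)))

/-- `L_q(H,f¹,R_{f¹})` in the vectorized setting. -/
def LrestrV {Q : Type*} {n m : ℕ} (G : GameGraph Q) (FAv : Fin m → Set Q)
    (FGv : Fin n → Set Q) (q : Q) (f : List Q → Q) : Set (ℕ → Q) :=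
  {π | π ∈ Lstrat G q f ∧ ∀ k, π k ∈ G.env → envStepV G FAv FGv (π k) (π (k + 1))}
/-! ### Auxiliary development for the soundness proof -/

section SoundnessAux

open Set

variable {Q : Type*}

/-! #### Knaster–Tarski basics -/

lemma lfpSet_le {F : Set Q → Set Q} {S : Set Q} (h : F S ⊆ S) : lfpSet F ⊆ S :=
  sInter_subset_of_mem h

lemma le_gfpSet {F : Set Q → Set Q} {S : Set Q} (h : S ⊆ F S) : S ⊆ gfpSet F :=
  subset_sUnion_of_mem h

lemma lfpSet_mono {F F' : Set Q → Set Q} (h : ∀ S, F S ⊆ F' S) :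
    lfpSet F ⊆ lfpSet F' := by
  apply subset_sInter
  intro S hS
  exact lfpSet_le ((h S).trans hS)

lemma gfpSet_mono {F F' : Set Q → Set Q} (h : ∀ S, F S ⊆ F' S) :
    gfpSet F ⊆ gfpSet F' := by
  apply sUnion_subset
  intro S hS
  exact le_gfpSet (Set.Subset.trans hS (h S))

lemma lfpSet_fixed {F : Set Q → Set Q} (hF : Monotone F) : F (lfpSet F) = lfpSet F := by
  have h1 : F (lfpSet F) ⊆ lfpSet F := by
    apply subset_sInter
    intro S hS
    exact (hF (lfpSet_le hS)).trans hS
  exact h1.antisymm (lfpSet_le (hF h1))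

lemma gfpSet_fixed {F : Set Q → Set Q} (hF : Monotone F) : F (gfpSet F) = gfpSet F := by
  have h1 : gfpSet F ⊆ F (gfpSet F) := by
    apply sUnion_subset
    intro S hS
    exact Set.Subset.trans hS (hF (le_gfpSet hS))
  exact (le_gfpSet (hF h1)).antisymm h1

lemma iter_subset_lfp {F : Set Q → Set Q} (hF : Monotone F) {g : ℕ → Set Q}
    (h0 : g 0 = ∅) (hs : ∀ n, g (n + 1) = F (g n)) : ∀ n, g n ⊆ lfpSet F := by
  intro n
  induction n with
  | zero => rw [h0]; exact empty_subset _
  | succ n ih => rw [hs]; exact (hF ih).trans (lfpSet_fixed hF).subset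

lemma lfp_subset_iUnion [Fintype Q] {F : Set Q → Set Q} (hF : Monotone F)
    {g : ℕ → Set Q} (h0 : g 0 = ∅) (hs : ∀ n, g (n + 1) = F (g n)) :
    lfpSet F ⊆ ⋃ n, g n := by
  have hmono : ∀ n, g n ⊆ g (n + 1) := by
    intro n
    induction n with
    | zero => rw [h0]; exact empty_subset _
    | succ n ih => rw [hs, hs]; exact hF ih
  have hstab : ∃ n, g (n + 1) = g n := by
    by_contra hc
    push_neg at hc
    have hcard : ∀ n, n ≤ (g n).ncard := by
      intro n
      induction n with
      | zero => exact Nat.zero_le _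
      | succ n ih =>
        have hlt : (g n).ncard < (g (n + 1)).ncard :=
          Set.ncard_lt_ncard (ssubset_of_subset_of_ne (hmono n) (Ne.symm (hc n)))
            (Set.toFinite _)
        omega
    have h1 := hcard (Nat.card Q + 1)
    have h2 : (g (Nat.card Q + 1)).ncard ≤ Nat.card Q := by
      have := Set.ncard_le_ncard (subset_univ (g (Nat.card Q + 1))) finite_univ
      rwa [Set.ncard_univ] at this
    omega
  obtain ⟨n, hn⟩ := hstab
  have hpre : F (g n) ⊆ g n := by rw [← hs]; exact hn.subset
  exact (lfpSet_le hpre).trans (subset_iUnion g n)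

/-! #### Monotonicity of the operators -/

lemma PreE_mono (G : GameGraph Q) {P P' : Set Q} (h : P ⊆ P') : G.PreE P ⊆ G.PreE P' := by
  rintro q ⟨x, hx1, hx2⟩
  exact ⟨x, hx1, h hx2⟩

lemma Pre1_mono (G : GameGraph Q) {P P' : Set Q} (h : P ⊆ P') : G.Pre1 P ⊆ G.Pre1 P' := by
  rintro q (⟨h1, h2⟩ | ⟨h1, h2⟩)
  · exact Or.inl ⟨h1, h2.trans h⟩
  · obtain ⟨x, hx1, hx2⟩ := h2
    exact Or.inr ⟨h1, x, hx1, h hx2⟩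

lemma Precond_mono (G : GameGraph Q) {P1 P1' P2 P2' : Set Q} (h1 : P1 ⊆ P1')
    (h2 : P2 ⊆ P2') : G.Precond P1 P2 ⊆ G.Precond P1' P2' :=
  fun _ hq => ⟨PreE_mono G h1 hq.1, Pre1_mono G (union_subset_union h1 h2) hq.2⟩

lemma body_mono (G : GameGraph Q) (FA FG : Set Q) {Z Z' Y Y' X X' W W' : Set Q}
    (hZ : Z ⊆ Z') (hY : Y ⊆ Y') (hX : X ⊆ X') (hW : W ⊆ W') :
    body G FA FG Z Y X W ⊆ body G FA FG Z' Y' X' W' := by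
  refine union_subset_union (union_subset_union ?_ ?_) ?_
  · exact inter_subset_inter_right _ (Pre1_mono G hZ)
  · exact Pre1_mono G hY
  · exact inter_subset_inter_right _ (Precond_mono G hW (diff_subset_diff_left hX))

lemma innerW_mono (G : GameGraph Q) (FA FG : Set Q) {Z Z' Y Y' X X' : Set Q}
    (hZ : Z ⊆ Z') (hY : Y ⊆ Y') (hX : X ⊆ X') :
    innerW G FA FG Z Y X ⊆ innerW G FA FG Z' Y' X' :=
  lfpSet_mono fun W => body_mono G FA FG hZ hY hX (subset_refl W)

lemma innerX_mono (G : GameGraph Q) (FA FG : Set Q) {Z Z' Y Y' : Set Q}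
    (hZ : Z ⊆ Z') (hY : Y ⊆ Y') : innerX G FA FG Z Y ⊆ innerX G FA FG Z' Y' :=
  gfpSet_mono fun X => innerW_mono G FA FG hZ hY (subset_refl X)

lemma innerY_mono (G : GameGraph Q) (FA FG : Set Q) {Z Z' : Set Q} (hZ : Z ⊆ Z') :
    innerY G FA FG Z ⊆ innerY G FA FG Z' :=
  lfpSet_mono fun Y => innerX_mono G FA FG hZ (subset_refl Y)

/-! #### Basic facts about the game graph -/

lemma env_or_sys (G : GameGraph Q) (q : Q) : q ∈ G.env ∨ q ∈ G.sys := by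
  have h : q ∈ G.env ∪ G.sys := by rw [G.union_env_sys]; trivial
  exact h

lemma not_sys_of_env (G : GameGraph Q) {q : Q} (he : q ∈ G.env) : q ∉ G.sys :=
  fun hs => Set.disjoint_left.mp G.disjoint_env_sys he hs

lemma Pre1_env (G : GameGraph Q) {q : Q} {P : Set Q} (he : q ∈ G.env) :
    q ∈ G.Pre1 P ↔ G.delta q ⊆ P := by
  constructor
  · rintro (⟨_, h⟩ | ⟨hs, _⟩)
    · exact h
    · exact absurd hs (not_sys_of_env G he)
  · intro h; exact Or.inl ⟨he, h⟩

lemma Pre1_sys (G : GameGraph Q) {q : Q} {P : Set Q} (hs : q ∈ G.sys) :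
    q ∈ G.Pre1 P ↔ (G.delta q ∩ P).Nonempty := by
  constructor
  · rintro (⟨he, _⟩ | ⟨_, h⟩)
    · exact absurd hs (not_sys_of_env G he)
    · exact h
  · intro h; exact Or.inr ⟨hs, h⟩

lemma not_mem_Pre1_empty (G : GameGraph Q) (q : Q) : q ∉ G.Pre1 (∅ : Set Q) := by
  rintro (⟨_, h⟩ | ⟨_, h⟩)
  · obtain ⟨x, hx⟩ := G.delta_nonempty q
    exact h hx
  · simp at h

lemma not_mem_PreE_empty (G : GameGraph Q) (q : Q) : q ∉ G.PreE (∅ : Set Q) := by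
  rintro ⟨x, _, hx⟩
  exact hx

/-! #### Structure of the fixed point and its approximants -/

variable [Fintype Q] (G : GameGraph Q) (FA FG : Set Q)

lemma phi4_eq_lfp :
    phi4 G FA FG = lfpSet (fun Y => innerX G FA FG (phi4 G FA FG) Y) := by
  have h : innerY G FA FG (phi4 G FA FG) = phi4 G FA FG :=
    gfpSet_fixed fun _ _ hab => innerY_mono G FA FG hab
  exact h.symm

lemma monotone_innerX_Y : Monotone (fun Y => innerX G FA FG (phi4 G FA FG) Y) :=
  fun _ _ hab => innerX_mono G FA FG (subset_refl _) hab

lemma Yapprox_subset_phi4 (i : ℕ) : Yapprox G FA FG i ⊆ phi4 G FA FG := by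
  have h := iter_subset_lfp (monotone_innerX_Y G FA FG) (g := Yapprox G FA FG) rfl
    (fun _ => rfl) i
  rwa [← phi4_eq_lfp] at h

lemma phi4_subset_iUnion : phi4 G FA FG ⊆ ⋃ i, Yapprox G FA FG i := by
  have h := lfp_subset_iUnion (monotone_innerX_Y G FA FG) (g := Yapprox G FA FG) rfl
    (fun _ => rfl)
  rwa [← phi4_eq_lfp] at h

lemma Yapprox_succ_eq_lfp (i : ℕ) :
    Yapprox G FA FG (i + 1) =
      lfpSet (fun W =>
        body G FA FG (phi4 G FA FG) (Yapprox G FA FG i) (Yapprox G FA FG (i + 1)) W) := by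
  have hm : Monotone (fun X => innerW G FA FG (phi4 G FA FG) (Yapprox G FA FG i) X) :=
    fun _ _ hab => innerW_mono G FA FG (subset_refl _) (subset_refl _) hab
  exact (gfpSet_fixed hm).symm

lemma monotone_body_W (i : ℕ) :
    Monotone (fun W =>
      body G FA FG (phi4 G FA FG) (Yapprox G FA FG (i - 1)) (Yapprox G FA FG i) W) :=
  fun _ _ hab => body_mono G FA FG (subset_refl _) (subset_refl _) (subset_refl _) hab

lemma Wapprox_succ (i j : ℕ) :
    Wapprox G FA FG i (j + 1) =
      body G FA FG (phi4 G FA FG) (Yapprox G FA FG (i - 1)) (Yapprox G FA FG i)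
        (Wapprox G FA FG i j) := rfl

lemma Yapprox_eq_lfp_pred {i : ℕ} (hi : 0 < i) :
    Yapprox G FA FG i =
      lfpSet (fun W =>
        body G FA FG (phi4 G FA FG) (Yapprox G FA FG (i - 1)) (Yapprox G FA FG i) W) := by
  obtain ⟨i', rfl⟩ : ∃ i', i = i' + 1 := ⟨i - 1, by omega⟩
  simpa using Yapprox_succ_eq_lfp G FA FG i'

lemma Wapprox_subset_Y {i : ℕ} (hi : 0 < i) (j : ℕ) :
    Wapprox G FA FG i j ⊆ Yapprox G FA FG i := by
  have h := iter_subset_lfp (monotone_body_W G FA FG i) (g := Wapprox G FA FG i) rfl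
    (fun n => Wapprox_succ G FA FG i n) j
  rwa [← Yapprox_eq_lfp_pred G FA FG hi] at h

lemma Y_subset_iUnion_W {i : ℕ} (hi : 0 < i) :
    Yapprox G FA FG i ⊆ ⋃ j, Wapprox G FA FG i j := by
  have h := lfp_subset_iUnion (monotone_body_W G FA FG i) (g := Wapprox G FA FG i) rfl
    (fun n => Wapprox_succ G FA FG i n)
  rwa [← Yapprox_eq_lfp_pred G FA FG hi] at h

lemma Yapprox_mono : ∀ {i i' : ℕ}, i ≤ i' → Yapprox G FA FG i ⊆ Yapprox G FA FG i' := by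
  have hstep : ∀ i, Yapprox G FA FG i ⊆ Yapprox G FA FG (i + 1) := by
    intro i
    induction i with
    | zero => exact empty_subset _
    | succ i ih => exact innerX_mono G FA FG (subset_refl _) ih
  intro i i' h
  exact monotone_nat_of_le_succ hstep h

lemma Wapprox_mono (i : ℕ) :
    ∀ {j j' : ℕ}, j ≤ j' → Wapprox G FA FG i j ⊆ Wapprox G FA FG i j' := by
  have hstep : ∀ j, Wapprox G FA FG i j ⊆ Wapprox G FA FG i (j + 1) := by
    intro j
    induction j with
    | zero => exact empty_subset _
    | succ j ih =>
      rw [Wapprox_succ, Wapprox_succ]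
      exact body_mono G FA FG (subset_refl _) (subset_refl _) (subset_refl _) ih
  intro j j' h
  exact monotone_nat_of_le_succ hstep h

/-! #### Ranks -/

lemma rank_min {q : Q} {i : ℕ} (hq : q ∈ Yapprox G FA FG i) (hi : 0 < i) :
    ∃ i' j', hasRank G FA FG q i' j' ∧ i' ≤ i ∧
      ∀ j0, q ∈ Wapprox G FA FG i' j0 → j' ≤ j0 := by
  classical
  have hex : ∃ n, q ∈ Yapprox G FA FG n := ⟨i, hq⟩
  set i' := Nat.find hex with hi'def
  have hi'le : i' ≤ i := Nat.find_min' hex hq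
  have hqY : q ∈ Yapprox G FA FG i' := Nat.find_spec hex
  have hi'pos : 0 < i' := by
    rcases Nat.eq_zero_or_pos i' with h | h
    · rw [h] at hqY; exact absurd hqY (by simp [Yapprox])
    · exact h
  have hnY : q ∉ Yapprox G FA FG (i' - 1) := Nat.find_min hex (by omega)
  have hexW : ∃ j, q ∈ Wapprox G FA FG i' j := by
    have h := Y_subset_iUnion_W G FA FG hi'pos hqY
    simpa using h
  set j' := Nat.find hexW with hj'def
  have hqW : q ∈ Wapprox G FA FG i' j' := Nat.find_spec hexW
  have hj'pos : 0 < j' := by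
    rcases Nat.eq_zero_or_pos j' with h | h
    · rw [h] at hqW; exact absurd hqW (by simp [Wapprox])
    · exact h
  have hnW : q ∉ Wapprox G FA FG i' (j' - 1) := Nat.find_min hexW (by omega)
  exact ⟨i', j', ⟨hi'pos, hj'pos, ⟨hqY, hnY⟩, hqW, hnW⟩, hi'le,
    fun j0 h => Nat.find_min' hexW h⟩

lemma rank_exists {q : Q} (hq : q ∈ phi4 G FA FG) : ∃ i j, hasRank G FA FG q i j := by
  obtain ⟨i, hi⟩ := mem_iUnion.mp (phi4_subset_iUnion G FA FG hq)
  have hipos : 0 < i := by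
    rcases Nat.eq_zero_or_pos i with h | h
    · rw [h] at hi; exact absurd hi (by simp [Yapprox])
    · exact h
  obtain ⟨i', j', hr, _, _⟩ := rank_min G FA FG hi hipos
  exact ⟨i', j', hr⟩

lemma hasRank_mem_phi4 {q : Q} {i j : ℕ} (h : hasRank G FA FG q i j) :
    q ∈ phi4 G FA FG :=
  Yapprox_subset_phi4 G FA FG i h.2.2.1.1

lemma rank_unique {q : Q} {i j i' j' : ℕ} (h1 : hasRank G FA FG q i j)
    (h2 : hasRank G FA FG q i' j') : i = i' ∧ j = j' := by
  obtain ⟨hi1, hj1, ⟨hY1, hY1'⟩, hW1, hW1'⟩ := h1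
  obtain ⟨hi2, hj2, ⟨hY2, hY2'⟩, hW2, hW2'⟩ := h2
  have hii : i = i' := by
    by_contra h
    rcases Nat.lt_or_ge i i' with hlt | hge
    · exact hY2' (Yapprox_mono G FA FG (by omega) hY1)
    · exact hY1' (Yapprox_mono G FA FG (by omega) hY2)
  subst hii
  refine ⟨rfl, ?_⟩
  by_contra h
  rcases Nat.lt_or_ge j j' with hlt | hge
  · exact hW2' (Wapprox_mono G FA FG i (by omega) hW1)
  · exact hW1' (Wapprox_mono G FA FG i (by omega) hW2)

lemma rank_of_Y {q : Q} {i : ℕ} (hq : q ∈ Yapprox G FA FG i) (hi : 0 < i) :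
    ∃ i' j', hasRank G FA FG q i' j' ∧ i' ≤ i := by
  obtain ⟨i', j', hr, hle, _⟩ := rank_min G FA FG hq hi
  exact ⟨i', j', hr, hle⟩

lemma rank_of_W {q : Q} {i j0 : ℕ} (hq : q ∈ Wapprox G FA FG i j0) (hi : 0 < i) :
    ∃ i' j', hasRank G FA FG q i' j' ∧ (i' < i ∨ (i' = i ∧ j' ≤ j0)) := by
  have hY : q ∈ Yapprox G FA FG i := Wapprox_subset_Y G FA FG hi j0 hq
  obtain ⟨i', j', hr, hle, hmin⟩ := rank_min G FA FG hY hi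
  rcases Nat.lt_or_ge i' i with h | h
  · exact ⟨i', j', hr, Or.inl h⟩
  · have heq : i' = i := le_antisymm hle h
    subst heq
    exact ⟨i', j', hr, Or.inr ⟨rfl, hmin j0 hq⟩⟩

lemma rank_body {q : Q} {i j : ℕ} (hr : hasRank G FA FG q i j) :
    q ∈ body G FA FG (phi4 G FA FG) (Yapprox G FA FG (i - 1)) (Yapprox G FA FG i)
      (Wapprox G FA FG i (j - 1)) := by
  obtain ⟨hi, hj, _, hW, _⟩ := hr
  obtain ⟨j0, rfl⟩ : ∃ j0, j = j0 + 1 := ⟨j - 1, by omega⟩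
  rw [Wapprox_succ] at hW
  simpa using hW

lemma rank11_FG {q : Q} (hr : hasRank G FA FG q 1 1) : q ∈ FG := by
  have hb := rank_body G FA FG hr
  have hY0 : Yapprox G FA FG (1 - 1) = ∅ := rfl
  have hW0 : Wapprox G FA FG 1 (1 - 1) = ∅ := rfl
  rw [hY0, hW0] at hb
  rcases hb with (⟨hFG, _⟩ | hp) | ⟨_, ⟨hpe, _⟩⟩
  · exact hFG
  · exact absurd hp (not_mem_Pre1_empty G q)
  · exact absurd hpe (not_mem_PreE_empty G q)

lemma FA_rank {q : Q} {i j : ℕ} (hr : hasRank G FA FG q i j) (hFA : q ∈ FA)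
    (hFG : q ∉ FG) : j = 1 ∧ q ∈ G.Pre1 (Yapprox G FA FG (i - 1)) := by
  have hb := rank_body G FA FG hr
  rcases hb with (⟨h1, _⟩ | hp) | ⟨h1, _⟩
  · exact absurd h1 hFG
  · refine ⟨?_, hp⟩
    have hW1 : q ∈ Wapprox G FA FG i 1 := by
      rw [show (1 : ℕ) = 0 + 1 from rfl, Wapprox_succ]
      exact Or.inl (Or.inr hp)
    obtain ⟨_, hj, _, _, hnW⟩ := hr
    by_contra h
    exact hnW (Wapprox_mono G FA FG i (by omega) hW1)
  · exact absurd hFA h1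

/-! #### Step lemmas -/

variable (f : Q → Q)

lemma sys_step (hf : GoodStrategy G FA FG f) {q : Q} (hs : q ∈ G.sys)
    (hq : q ∈ phi4 G FA FG) :
    f q ∈ G.delta q ∧ f q ∈ phi4 G FA FG ∧
      (q ∈ FG ∨ ∀ i j, hasRank G FA FG q i j →
        ∃ i' j', hasRank G FA FG (f q) i' j' ∧ rankLt (i', j') (i, j)) := by
  obtain ⟨hd, H⟩ := hf q hs hq
  obtain ⟨i, j, hr⟩ := rank_exists G FA FG hq
  obtain ⟨h11, hne⟩ := H i j hr
  by_cases hc : (i, j) = ((1 : ℕ), (1 : ℕ))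
  · have hij : i = 1 ∧ j = 1 := by
      constructor <;> [exact congrArg Prod.fst hc; exact congrArg Prod.snd hc]
    obtain ⟨rfl, rfl⟩ := hij
    exact ⟨hd, h11 rfl, Or.inl (rank11_FG G FA FG hr)⟩
  · obtain ⟨i', j', hr', hlt⟩ := hne hc
    refine ⟨hd, hasRank_mem_phi4 G FA FG hr', Or.inr ?_⟩
    intro i0 j0 hr0
    obtain ⟨hi0, hj0⟩ := rank_unique G FA FG hr0 hr
    subst hi0; subst hj0
    exact ⟨i', j', hr', hlt⟩

lemma env_step {q q' : Q} {i j : ℕ} (he : q ∈ G.env) (hr : hasRank G FA FG q i j)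
    (hq' : q' ∈ G.delta q) :
    q' ∈ phi4 G FA FG ∧
      (q ∈ FG ∨
        (∃ i' j', hasRank G FA FG q' i' j' ∧ rankLt (i', j') (i, j)) ∨
        (q ∉ FA ∧ ∃ i' j', hasRank G FA FG q' i' j' ∧ i' ≤ i)) := by
  have hb := rank_body G FA FG hr
  have hipos : 0 < i := hr.1
  rcases hb with (⟨hFG, hp⟩ | hp) | ⟨hFA, _, hp1⟩
  · exact ⟨(Pre1_env G he).mp hp hq', Or.inl hFG⟩
  · have hY : q' ∈ Yapprox G FA FG (i - 1) := (Pre1_env G he).mp hp hq'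
    have hi1 : 0 < i - 1 := by
      by_contra h
      have h0 : i - 1 = 0 := by omega
      rw [h0] at hY
      exact absurd hY (by simp [Yapprox])
    obtain ⟨i', j', hr', hle⟩ := rank_of_Y G FA FG hY hi1
    exact ⟨Yapprox_subset_phi4 G FA FG _ hY,
      Or.inr (Or.inl ⟨i', j', hr', Or.inl (by omega)⟩)⟩
  · have hall := (Pre1_env G he).mp hp1 hq'
    rcases hall with hW | ⟨hYi, hnFA⟩
    · obtain ⟨i', j', hr', hlt⟩ := rank_of_W G FA FG hW hipos
      refine ⟨hasRank_mem_phi4 G FA FG hr', Or.inr (Or.inl ⟨i', j', hr', ?_⟩)⟩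
      have hjpos : 0 < j := hr.2.1
      rcases hlt with h | ⟨h1, h2⟩
      · exact Or.inl h
      · exact Or.inr ⟨h1, by omega⟩
    · obtain ⟨i', j', hr', hle⟩ := rank_of_Y G FA FG hYi hipos
      exact ⟨Yapprox_subset_phi4 G FA FG _ hYi,
        Or.inr (Or.inr ⟨hFA, i', j', hr', hle⟩)⟩

lemma env_choice {q : Q} {i j : ℕ} (he : q ∈ G.env) (hr : hasRank G FA FG q i j) :
    ∃ q', q' ∈ G.delta q ∧ q' ∈ phi4 G FA FG ∧
      (q ∈ FG ∨ ∃ i' j', hasRank G FA FG q' i' j' ∧ rankLt (i', j') (i, j)) := by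
  have hb := rank_body G FA FG hr
  have hipos : 0 < i := hr.1
  rcases hb with (⟨hFG, hp⟩ | hp) | ⟨_, ⟨hpe, _⟩⟩
  · obtain ⟨x, hx⟩ := G.delta_nonempty q
    exact ⟨x, hx, (Pre1_env G he).mp hp hx, Or.inl hFG⟩
  · obtain ⟨x, hx⟩ := G.delta_nonempty q
    have hY : x ∈ Yapprox G FA FG (i - 1) := (Pre1_env G he).mp hp hx
    have hi1 : 0 < i - 1 := by
      by_contra h
      have h0 : i - 1 = 0 := by omega
      rw [h0] at hY
      exact absurd hY (by simp [Yapprox])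
    obtain ⟨i', j', hr', hle⟩ := rank_of_Y G FA FG hY hi1
    exact ⟨x, hx, Yapprox_subset_phi4 G FA FG _ hY,
      Or.inr ⟨i', j', hr', Or.inl (by omega)⟩⟩
  · obtain ⟨x, hx1, hx2⟩ := hpe
    obtain ⟨i', j', hr', hlt⟩ := rank_of_W G FA FG hx2 hipos
    refine ⟨x, hx1, hasRank_mem_phi4 G FA FG hr', Or.inr ⟨i', j', hr', ?_⟩⟩
    have hjpos : 0 < j := hr.2.1
    rcases hlt with h | ⟨h1, h2⟩
    · exact Or.inl h
    · exact Or.inr ⟨h1, by omega⟩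

lemma env_choice' {q : Q} (he : q ∈ G.env) (hq : q ∈ phi4 G FA FG) :
    ∃ q', q' ∈ G.delta q ∧ q' ∈ phi4 G FA FG ∧
      (q ∈ FG ∨ ∀ i j, hasRank G FA FG q i j →
        ∃ i' j', hasRank G FA FG q' i' j' ∧ rankLt (i', j') (i, j)) := by
  obtain ⟨i, j, hr⟩ := rank_exists G FA FG hq
  obtain ⟨q', h1, h2, h3⟩ := env_choice G FA FG he hr
  refine ⟨q', h1, h2, h3.imp id fun hdec i0 j0 hr0 => ?_⟩
  obtain ⟨hi0, hj0⟩ := rank_unique G FA FG hr0 hr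
  subst hi0; subst hj0
  exact hdec

lemma step_compliant (hf : GoodStrategy G FA FG f) {q0 q1 : Q}
    (hq : q0 ∈ phi4 G FA FG) (hd : q1 ∈ G.delta q0) (hc : q0 ∈ G.sys → q1 = f q0) :
    q1 ∈ phi4 G FA FG ∧
      (q0 ∈ FG ∨
        (∀ i j, hasRank G FA FG q0 i j →
          ∃ i' j', hasRank G FA FG q1 i' j' ∧ rankLt (i', j') (i, j)) ∨
        (q0 ∉ FA ∧ ∀ i j, hasRank G FA FG q0 i j →
          ∃ i' j', hasRank G FA FG q1 i' j' ∧ i' ≤ i)) := by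
  rcases env_or_sys G q0 with he | hs
  · obtain ⟨i, j, hr⟩ := rank_exists G FA FG hq
    obtain ⟨h1, h2⟩ := env_step G FA FG he hr hd
    refine ⟨h1, ?_⟩
    rcases h2 with h | ⟨i', j', hr', hlt⟩ | ⟨hnFA, i', j', hr', hle⟩
    · exact Or.inl h
    · refine Or.inr (Or.inl fun i0 j0 hr0 => ?_)
      obtain ⟨hi0, hj0⟩ := rank_unique G FA FG hr0 hr
      subst hi0; subst hj0
      exact ⟨i', j', hr', hlt⟩
    · refine Or.inr (Or.inr ⟨hnFA, fun i0 j0 hr0 => ?_⟩)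
      obtain ⟨hi0, hj0⟩ := rank_unique G FA FG hr0 hr
      subst hi0; subst hj0
      exact ⟨i', j', hr', hle⟩
  · obtain rfl := hc hs
    obtain ⟨_, h2, h3⟩ := sys_step G FA FG f hf hs hq
    exact ⟨h2, h3.imp id Or.inl⟩

/-! #### The constructed play -/

open Classical in
noncomputable def gfun : Q → Q := fun q =>
  if h : q ∈ G.env ∧ q ∈ phi4 G FA FG then
    Classical.choose (env_choice' G FA FG h.1 h.2)
  else f q

lemma gfun_sys {q : Q} (hs : q ∈ G.sys) : gfun G FA FG f q = f q :=
  dif_neg fun h => not_sys_of_env G h.1 hs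

lemma gfun_spec (hf : GoodStrategy G FA FG f) {q : Q} (hq : q ∈ phi4 G FA FG) :
    gfun G FA FG f q ∈ G.delta q ∧ gfun G FA FG f q ∈ phi4 G FA FG ∧
      (q ∈ FG ∨ ∀ i j, hasRank G FA FG q i j →
        ∃ i' j', hasRank G FA FG (gfun G FA FG f q) i' j' ∧ rankLt (i', j') (i, j)) := by
  rcases env_or_sys G q with he | hs
  · rw [gfun, dif_pos ⟨he, hq⟩]
    exact Classical.choose_spec (env_choice' G FA FG he hq)
  · rw [gfun_sys G FA FG f hs]
    exact sys_step G FA FG f hf hs hq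

lemma gfun_iter_phi4 (hf : GoodStrategy G FA FG f) {q : Q} (hq : q ∈ phi4 G FA FG) :
    ∀ t, (gfun G FA FG f)^[t] q ∈ phi4 G FA FG := by
  intro t
  induction t with
  | zero => simpa using hq
  | succ t ih =>
    rw [Function.iterate_succ_apply']
    exact (gfun_spec G FA FG f hf ih).2.1

lemma gfun_reach_aux (hf : GoodStrategy G FA FG f) :
    ∀ i j (q : Q), q ∈ phi4 G FA FG → hasRank G FA FG q i j →
      ∃ t, (gfun G FA FG f)^[t] q ∈ FG := by
  intro i
  induction i using Nat.strong_induction_on with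
  | _ i ih =>
    intro j
    induction j using Nat.strong_induction_on with
    | _ j ihj =>
      intro q hq hr
      by_cases hFG : q ∈ FG
      · exact ⟨0, by simpa using hFG⟩
      · obtain ⟨_, hZ, hst⟩ := gfun_spec G FA FG f hf hq
        rcases hst with h | h
        · exact absurd h hFG
        · obtain ⟨i', j', hr', hlt⟩ := h i j hr
          have hrec : ∃ t, (gfun G FA FG f)^[t] (gfun G FA FG f q) ∈ FG := by
            rcases hlt with h1 | ⟨h1, h2⟩
            · exact ih i' h1 j' _ hZ hr'
            · subst h1
              exact ihj j' h2 _ hZ hr'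
          obtain ⟨t, ht⟩ := hrec
          exact ⟨t + 1, by rw [Function.iterate_succ_apply]; exact ht⟩

lemma gfun_reach (hf : GoodStrategy G FA FG f) {q : Q} (hq : q ∈ phi4 G FA FG) :
    ∃ t, (gfun G FA FG f)^[t] q ∈ FG := by
  obtain ⟨i, j, hr⟩ := rank_exists G FA FG hq
  exact gfun_reach_aux G FA FG f hf i j q hq hr

lemma Lmem_inv (hf : GoodStrategy G FA FG f) {q : Q} (hq : q ∈ phi4 G FA FG)
    {π : ℕ → Q} (hπ : π ∈ Lmem G q f) : ∀ k, π k ∈ phi4 G FA FG := by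
  intro k
  induction k with
  | zero => rw [hπ.1.1]; exact hq
  | succ k ih =>
    exact (step_compliant G FA FG f hf ih (hπ.1.2 k) (hπ.2 k)).1

end SoundnessAux
/-- Theorem 1 of the paper: soundness of the 4-nested fixed point
for singleton winning conditions.  For every state `q ∈ ⟦φ₄⟧` the extracted strategy
`f¹` satisfies (i) `L_q(H,f¹) ⊆ L̄_q(H,F_A) ∪ L_q(H,F_G)`, (ii)
`L_q(H,f¹) ∩ L_q(H,F_G) ≠ ∅`, and (iii) if `L_q(H,F_G) ⊆ L_q(H,F_A)` then
`Pre(L_q(H,f¹)) = Pre(L_q(H,f¹) ∩ L_q(H,F_A))`. -/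
theorem soundness_singleton {Q : Type*} [Fintype Q] (G : GameGraph Q) (FA FG : Set Q)
    (f : Q → Q) (hf : GoodStrategy G FA FG f) (q : Q) (hq : q ∈ phi4 G FA FG) :
    Lmem G q f ⊆ (LBuchi G q FA)ᶜ ∪ LBuchi G q FG ∧
      (Lmem G q f ∩ LBuchi G q FG).Nonempty ∧
      (LBuchi G q FG ⊆ LBuchi G q FA →
        prefixes (Lmem G q f) = prefixes (Lmem G q f ∩ LBuchi G q FA)) := by
  classical
  refine ⟨?_, ?_, ?_⟩
  · -- (i)
    intro π hπ
    by_cases hFG : InfOft π FG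
    · exact Or.inr ⟨hπ.1, hFG⟩
    · refine Or.inl ?_
      intro hmem
      obtain ⟨-, hFA⟩ := hmem
      unfold InfOft at hFG
      push_neg at hFG
      obtain ⟨N, hN⟩ := hFG
      have hN' : ∀ k, N ≤ k → π k ∉ FG := fun k hk h => (hN k hk) h
      have hZ : ∀ k, π k ∈ phi4 G FA FG := Lmem_inv G FA FG f hf hq hπ
      have hR : ∀ k, ∃ p : ℕ × ℕ, hasRank G FA FG (π k) p.1 p.2 := by
        intro k
        obtain ⟨i, j, h⟩ := rank_exists G FA FG (hZ k)
        exact ⟨(i, j), h⟩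
      set I : ℕ → ℕ := fun k => ((hR k).choose).1 with hI
      set J : ℕ → ℕ := fun k => ((hR k).choose).2 with hJ
      have hrk : ∀ k, hasRank G FA FG (π k) (I k) (J k) := fun k => (hR k).choose_spec
      have hstep : ∀ k, N ≤ k → I (k + 1) ≤ I k ∧ (π k ∈ FA → I (k + 1) < I k) := by
        intro k hk
        have hsc := step_compliant G FA FG f hf (hZ k) (hπ.1.2 k) (hπ.2 k)
        rcases hsc.2 with hFGk | hdec | ⟨hnFA, hdec⟩
        · exact absurd hFGk (hN' k hk)
        · obtain ⟨i', j', hr', hlt⟩ := hdec (I k) (J k) (hrk k)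
          obtain ⟨hi, hj⟩ := rank_unique G FA FG (hrk (k + 1)) hr'
          constructor
          · rcases hlt with h | ⟨h, _⟩ <;> omega
          · intro hFAk
            have hJ1 : J k = 1 := (FA_rank G FA FG (hrk k) hFAk (hN' k hk)).1
            have hj'pos : 0 < j' := hr'.2.1
            rcases hlt with h | ⟨h1, h2⟩ <;> omega
        · obtain ⟨i', j', hr', hle⟩ := hdec (I k) (J k) (hrk k)
          obtain ⟨hi, hj⟩ := rank_unique G FA FG (hrk (k + 1)) hr'
          exact ⟨by omega, fun hFAk => absurd hFAk hnFA⟩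
      have hmono : ∀ k l, N ≤ k → k ≤ l → I l ≤ I k := by
        intro k l hk hkl
        induction l, hkl using Nat.le_induction with
        | base => exact le_refl _
        | succ l hkl ih =>
          have := (hstep l (le_trans hk hkl)).1
          omega
      have hkey : ∀ n, ∃ t, N ≤ t ∧ I t + n ≤ I N := by
        intro n
        induction n with
        | zero => exact ⟨N, le_refl _, by omega⟩
        | succ n ih =>
          obtain ⟨t, htN, hIt⟩ := ih
          obtain ⟨s, hs, hsFA⟩ := hFA t
          have h1 : I s ≤ I t := hmono t s htN hs
          have h2 : I (s + 1) < I s := (hstep s (le_trans htN hs)).2 hsFA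
          exact ⟨s + 1, by omega, by omega⟩
      obtain ⟨t, _, h⟩ := hkey (I N + 1)
      omega
  · -- (ii)
    refine ⟨fun t => (gfun G FA FG f)^[t] q, ⟨⟨by simp, fun k => ?_⟩, fun k hs => ?_⟩,
      ⟨⟨by simp, fun k => ?_⟩, ?_⟩⟩
    · show (gfun G FA FG f)^[k + 1] q ∈ G.delta ((gfun G FA FG f)^[k] q)
      rw [Function.iterate_succ_apply']
      exact (gfun_spec G FA FG f hf (gfun_iter_phi4 G FA FG f hf hq k)).1
    · show (gfun G FA FG f)^[k + 1] q = f ((gfun G FA FG f)^[k] q)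
      rw [Function.iterate_succ_apply', gfun_sys G FA FG f hs]
    · show (gfun G FA FG f)^[k + 1] q ∈ G.delta ((gfun G FA FG f)^[k] q)
      rw [Function.iterate_succ_apply']
      exact (gfun_spec G FA FG f hf (gfun_iter_phi4 G FA FG f hf hq k)).1
    · intro n
      obtain ⟨t, ht⟩ := gfun_reach G FA FG f hf (gfun_iter_phi4 G FA FG f hf hq n)
      refine ⟨t + n, by omega, ?_⟩
      rwa [← Function.iterate_add_apply] at ht
  · -- (iii)
    intro hGA
    apply Set.Subset.antisymm
    · rintro w ⟨π, hπ, k, rfl⟩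
      have hZ : ∀ t, π t ∈ phi4 G FA FG := Lmem_inv G FA FG f hf hq hπ
      set σ : ℕ → Q := fun t => if t < k then π t else (gfun G FA FG f)^[t - k] (π k)
        with hσdef
      have hagree : ∀ t, t ≤ k → σ t = π t := by
        intro t ht
        rcases Nat.lt_or_ge t k with h | h
        · simp [hσdef, h]
        · have : t = k := by omega
          subst this
          simp [hσdef]
      have hge : ∀ t, k ≤ t → σ t = (gfun G FA FG f)^[t - k] (π k) := by
        intro t ht
        simp [hσdef, Nat.not_lt.mpr ht]
      have hσZ : ∀ t, k ≤ t → σ t ∈ phi4 G FA FG := by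
        intro t ht
        rw [hge t ht]
        exact gfun_iter_phi4 G FA FG f hf (hZ k) _
      have hsucc : ∀ t, k ≤ t → σ (t + 1) = gfun G FA FG f (σ t) := by
        intro t ht
        rw [hge (t + 1) (by omega), hge t ht,
          show t + 1 - k = (t - k) + 1 by omega, Function.iterate_succ_apply']
      have hmem : σ ∈ Lmem G q f := by
        refine ⟨⟨?_, ?_⟩, ?_⟩
        · rw [hagree 0 (Nat.zero_le _)]
          exact hπ.1.1
        · intro t
          rcases Nat.lt_or_ge t k with h | h
          · rw [hagree t (by omega), hagree (t + 1) (by omega)]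
            exact hπ.1.2 t
          · rw [hsucc t h]
            exact (gfun_spec G FA FG f hf (hσZ t h)).1
        · intro t hts
          rcases Nat.lt_or_ge t k with h | h
          · rw [hagree t (by omega), hagree (t + 1) (by omega)]
            exact hπ.2 t (by rwa [hagree t (by omega)] at hts)
          · rw [hsucc t h, gfun_sys G FA FG f hts]
      have hFGinf : InfOft σ FG := by
        intro n
        have hk : k ≤ max n k := le_max_right _ _
        obtain ⟨t, ht⟩ := gfun_reach G FA FG f hf (hσZ (max n k) hk)
        refine ⟨max n k + t, by omega, ?_⟩
        have h1 : σ (max n k + t) = (gfun G FA FG f)^[max n k + t - k] (π k) :=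
          hge _ (by omega)
        have h2 : (gfun G FA FG f)^[t] (σ (max n k)) ∈ FG := ht
        rw [hge (max n k) hk, ← Function.iterate_add_apply] at h2
        rw [h1, show max n k + t - k = t + (max n k - k) by omega]
        exact h2
      have hσFA : σ ∈ LBuchi G q FA := hGA ⟨hmem.1, hFGinf⟩
      refine ⟨σ, ⟨hmem, hσFA⟩, k, ?_⟩
      apply List.map_congr_left
      intro t ht
      rw [hagree t (le_of_lt (List.mem_range.mp ht))]
    · rintro w ⟨π, hπ, k, rfl⟩
      exact ⟨π, hπ.1, k, rfl⟩

end GR1
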